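/- For integers i ≥ j ≥ 0, the number of shortest 8-neighbor (king-move) paths in Z^2 from (0,0) to (i,j) equals the sum over nonnegative integers b with 2b ≤ i−j of i! / (b!·(j+b)!·(i−j−2b)!). -/

import Mathlib

/-- Two points of `ℤ²` are 8-neighbors (king moves): distinct and each coordinate differs
by at most 1. -/
def Adj8 (p q : ℤ × ℤ) : Prop :=
  p ≠ q ∧ (p.1 - q.1).natAbs ≤ 1 ∧ (p.2 - q.2).natAbs ≤ 1

/-- `f` is an 8-neighbor path of length `n` from `p` to `q`. -/
def IsPath8 (n : ℕ) (f : Fin (n + 1) → ℤ × ℤ) (p q : ℤ × ℤ) : Prop :=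
  f 0 = p ∧ f (Fin.last n) = q ∧ ∀ t : Fin n, Adj8 (f t.castSucc) (f t.succ)

/-!
A path with `i` king moves from `(0,0)` to `(i,j)` must advance its first coordinate by exactly
one at every move, so it is determined by its sequence of vertical moves in `{-1, 0, 1}`, which
sums to `j`. Recording the sets of down- and up-moves, such sequences with `b` down-moves
correspond to disjoint pairs of sets of sizes `b` and `j + b`, of which there are
`i! / (b! (j+b)! (i-j-2b)!)`.
-/

open Finset

namespace Fin

variable {G : Type*} [AddCommGroup G] {n : ℕ}

theorem partialSum_last (v : Fin n → G) : partialSum v (last n) = ∑ t, v t := by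
  rw [partialSum, val_last, List.take_of_length_le (by simp), List.sum_ofFn]

theorem partialSum_sub_castSucc {f : Fin (n + 1) → G} (hf : f 0 = 0) :
    partialSum (fun t => f t.succ - f t.castSucc) = f := by
  simpa [hf, sub_eq_neg_add] using partialSum_left_neg f

end Fin

theorem adj8_iff_adj8_zero_sub {p q : ℤ × ℤ} : Adj8 p q ↔ Adj8 0 (q - p) := by
  simp only [Adj8, ne_eq, Prod.ext_iff, Prod.fst_sub, Prod.snd_sub, Prod.fst_zero, Prod.snd_zero]
  omega

def path8EquivKingSteps (n : ℕ) (q : ℤ × ℤ) :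
    {f : Fin (n + 1) → ℤ × ℤ // IsPath8 n f 0 q} ≃
      {v : Fin n → ℤ × ℤ // (∀ t, Adj8 0 (v t)) ∧ ∑ t, v t = q} where
  toFun f := ⟨fun t => f.1 t.succ - f.1 t.castSucc,
    fun t => adj8_iff_adj8_zero_sub.1 (f.2.2.2 t),
    by rw [← Fin.partialSum_last, Fin.partialSum_sub_castSucc f.2.1, f.2.2.1]⟩
  invFun v := ⟨Fin.partialSum v.1, Fin.partialSum_zero _, by rw [Fin.partialSum_last, v.2.2],
    fun t => by
      rw [adj8_iff_adj8_zero_sub, Fin.partialSum_succ, add_sub_cancel_left]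
      exact v.2.1 t⟩
  left_inv f := Subtype.ext (Fin.partialSum_sub_castSucc f.2.1)
  right_inv v := Subtype.ext <| funext fun t => by
    simp only [Fin.partialSum_succ, add_sub_cancel_left]

theorem eq_of_forall_le_of_sum_eq_card {ι : Type*} [Fintype ι] {g : ι → ℤ}
    (hle : ∀ t, g t ≤ 1) (hsum : ∑ t, g t = Fintype.card ι) (t : ι) : g t = 1 := by
  have : ∑ t, g t = ∑ _t : ι, (1 : ℤ) := by simp [hsum]
  exact (Finset.sum_eq_sum_iff_of_le fun t _ => hle t).1 this t (mem_univ t)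

theorem adj8_zero_iff {v : ℤ × ℤ} :
    Adj8 0 v ↔ v ≠ 0 ∧ v.1.natAbs ≤ 1 ∧ v.2.natAbs ≤ 1 := by
  simp [Adj8, eq_comm]

theorem adj8_zero_mk_one {y : ℤ} : Adj8 0 (1, y) ↔ y.natAbs ≤ 1 := by
  simp [adj8_zero_iff]

def kingStepsEquivUnitSteps (n : ℕ) (j : ℤ) :
    {v : Fin n → ℤ × ℤ // (∀ t, Adj8 0 (v t)) ∧ ∑ t, v t = ((n : ℤ), j)} ≃
      {s : Fin n → ℤ // (∀ t, (s t).natAbs ≤ 1) ∧ ∑ t, s t = j} where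
  toFun v := ⟨fun t => (v.1 t).2, fun t => (adj8_zero_iff.1 (v.2.1 t)).2.2,
    by simpa [Prod.snd_sum] using congrArg Prod.snd v.2.2⟩
  invFun s := ⟨fun t => (1, s.1 t), fun t => adj8_zero_mk_one.2 (s.2.1 t), by
    simp [Prod.ext_iff, Prod.fst_sum, Prod.snd_sum, s.2.2]⟩
  left_inv v := by
    have hfst : ∀ t, (v.1 t).1 = 1 := eq_of_forall_le_of_sum_eq_card
      (fun t => by have := (adj8_zero_iff.1 (v.2.1 t)).2.1; omega)
      (by simpa [Prod.fst_sum] using congrArg Prod.fst v.2.2)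
    exact Subtype.ext <| funext fun t => Prod.ext (hfst t).symm rfl
  right_inv s := rfl

section DisjointPairs

variable {α : Type*} [Fintype α]

def unitStepsEquivDisjointPairs [DecidableEq α] :
    {s : α → ℤ // ∀ t, (s t).natAbs ≤ 1} ≃
      {x : Finset α × Finset α // Disjoint x.1 x.2} where
  toFun s := ⟨(univ.filter (s.1 · = -1), univ.filter (s.1 · = 1)),
    disjoint_filter.2 fun t _ h => by omega⟩
  invFun x := ⟨fun t => if t ∈ x.1.2 then 1 else if t ∈ x.1.1 then -1 else 0,
    fun t => by dsimp only; split_ifs <;> simp⟩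
  left_inv s := Subtype.ext <| funext fun t => by
    have := s.2 t
    rcases (by omega : s.1 t = -1 ∨ s.1 t = 0 ∨ s.1 t = 1) with h | h | h <;> simp [h]
  right_inv x := by
    have := disjoint_left.1 x.2
    ext t <;> by_cases h1 : t ∈ x.1.1 <;> by_cases h2 : t ∈ x.1.2 <;> simp_all

theorem sum_eq_card_filter_sub_card_filter {s : α → ℤ} (hs : ∀ t, (s t).natAbs ≤ 1) :
    ∑ t, s t = #{t | s t = 1} - #{t | s t = -1} := by
  calc ∑ t, s t = ∑ t, ((if s t = 1 then 1 else 0) - if s t = -1 then 1 else 0) :=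
        sum_congr rfl fun t _ => by have := hs t; split_ifs <;> omega
    _ = _ := by rw [sum_sub_distrib, sum_boole, sum_boole]

theorem card_unitSteps_sum_eq_card_disjoint_pairs [DecidableEq α] (j : ℤ) :
    Nat.card {s : α → ℤ // (∀ t, (s t).natAbs ≤ 1) ∧ ∑ t, s t = j} =
      #{x : Finset α × Finset α | Disjoint x.1 x.2 ∧ (#x.2 : ℤ) - #x.1 = j} := by
  rw [← Fintype.card_subtype, ← Nat.card_eq_fintype_card]
  refine Nat.card_congr <| (Equiv.subtypeSubtypeEquivSubtypeInter _ _).symm.trans <|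
    (Equiv.subtypeEquiv unitStepsEquivDisjointPairs fun s => ?_).trans
    (Equiv.subtypeSubtypeEquivSubtypeInter _ _)
  rw [sum_eq_card_filter_sub_card_filter s.2]
  rfl

theorem card_disjoint_pairs_of_card_eq [DecidableEq α] (b c : ℕ) :
    #{x : Finset α × Finset α | Disjoint x.1 x.2 ∧ #x.1 = b ∧ #x.2 = c} =
      (Fintype.card α).choose b * (Fintype.card α - b).choose c := by
  rw [card_eq_sum_card_fiberwise (f := Prod.fst) (t := powersetCard b univ)
    fun x hx => by simp_all]
  calc _ = ∑ D ∈ powersetCard b (univ : Finset α), #(powersetCard c Dᶜ) := by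
        refine sum_congr rfl fun D hD => ?_
        rw [← card_map (s := powersetCard c Dᶜ) (Function.Embedding.sectR D _)]
        apply congrArg
        ext ⟨D', U⟩
        rw [mem_powersetCard_univ] at hD
        simp only [mem_filter, mem_univ, true_and, mem_map, mem_powersetCard,
          subset_compl_iff_disjoint_left, Function.Embedding.sectR_apply, Prod.mk.injEq]
        constructor
        · rintro ⟨⟨hdisj, -, hU⟩, rfl⟩
          exact ⟨U, ⟨hdisj, hU⟩, rfl, rfl⟩
        · rintro ⟨U, ⟨hdisj, hU⟩, rfl, rfl⟩
          exact ⟨⟨hdisj, hD, hU⟩, rfl⟩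
    _ = _ := by
      rw [sum_congr rfl fun D hD => by
          rw [card_powersetCard, card_compl, mem_powersetCard_univ.1 hD],
        sum_const, card_powersetCard, card_univ, smul_eq_mul]

theorem card_disjoint_pairs_card_sub_eq [DecidableEq α] (j : ℕ) :
    #{x : Finset α × Finset α | Disjoint x.1 x.2 ∧ (#x.2 : ℤ) - #x.1 = j} =
      ∑ b ∈ range (Fintype.card α + 1),
        (Fintype.card α).choose b * (Fintype.card α - b).choose (j + b) := by
  rw [card_eq_sum_card_fiberwise (f := fun x => #x.1) (t := range (Fintype.card α + 1))
    fun x _ => mem_range_succ_iff.2 (card_le_univ x.1)]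
  refine sum_congr rfl fun b _ => ?_
  rw [filter_filter, ← card_disjoint_pairs_of_card_eq]
  congr 1
  refine filter_congr fun x _ => ?_
  rw [and_assoc]
  exact and_congr_right fun _ => by omega

end DisjointPairs

theorem Nat.choose_mul_choose_sub_eq_factorial_div {n b c : ℕ} (h : b + c ≤ n) :
    n.choose b * (n - b).choose c =
      n.factorial / (b.factorial * c.factorial * (n - b - c).factorial) := by
  refine (Nat.div_eq_of_eq_mul_left (by positivity) ?_).symm
  calc n.factorial = n.choose b * b.factorial * (n - b).factorial :=
        (Nat.choose_mul_factorial_mul_factorial (by omega)).symm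
    _ = n.choose b * b.factorial * ((n - b).choose c * c.factorial * (n - b - c).factorial) := by
      rw [Nat.choose_mul_factorial_mul_factorial (n := n - b) (by omega)]
    _ = n.choose b * (n - b).choose c * (b.factorial * c.factorial * (n - b - c).factorial) := by
      ring

/-- For `i ≥ j ≥ 0`, the number of shortest 8-neighbor paths from `(0,0)` to `(i,j)`
equals `∑_{b ≥ 0, 2b ≤ i−j} i!/(b!·(j+b)!·(i−j−2b)!)`. -/
theorem count_shortest_paths_8N (i j : ℕ) (h : j ≤ i) :
    Nat.card {f : Fin (i + 1) → ℤ × ℤ // IsPath8 i f (0, 0) ((i : ℤ), (j : ℤ))} =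
      ∑ b ∈ Finset.range (i + 1),
        if 2 * b ≤ i - j then
          Nat.factorial i /
            (Nat.factorial b * Nat.factorial (j + b) * Nat.factorial (i - j - 2 * b))
        else 0 := by
  calc _ = Nat.card {s : Fin i → ℤ // (∀ t, (s t).natAbs ≤ 1) ∧ ∑ t, s t = j} :=
        Nat.card_congr ((path8EquivKingSteps i _).trans (kingStepsEquivUnitSteps i j))
    _ = ∑ b ∈ range (i + 1), i.choose b * (i - b).choose (j + b) := by
      rw [card_unitSteps_sum_eq_card_disjoint_pairs, card_disjoint_pairs_card_sub_eq,
        Fintype.card_fin]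
    _ = _ := sum_congr rfl fun b _ => by
      split_ifs with hb
      · rw [Nat.choose_mul_choose_sub_eq_factorial_div (by omega),
          show i - b - (j + b) = i - j - 2 * b by omega]
      · rw [Nat.choose_eq_zero_of_lt (n := i - b) (by omega), mul_zero]
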